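/- Let X and Y be d×K complex matrices such that ρ := XX† and σ := YY† both have trace 1. Then the trace-norm distance satisfies ‖ρ − σ‖₁ ≤ 2·‖X − Y‖₂. -/

import Mathlib

open scoped Matrix ComplexOrder

open scoped Classical in
/-- The positive semidefinite square root of a matrix: the PSD square root if the
matrix is positive semidefinite, and `0` otherwise (junk value). -/
noncomputable def psdSqrt {n : Type*} [Fintype n] [DecidableEq n]
    (M : Matrix n n ℂ) : Matrix n n ℂ :=
  if h : M.PosSemidef then
    h.1.eigenvectorUnitary.1 * Matrix.diagonal ((↑) ∘ (√·) ∘ h.1.eigenvalues) *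
      (star h.1.eigenvectorUnitary : Matrix n n ℂ)
  else 0

/-- The fidelity `F(ρ,σ) := Tr((√σ ρ √σ)^{1/2})` of two (positive semidefinite)
matrices, as a real number. -/
noncomputable def fidelity {n : Type*} [Fintype n] [DecidableEq n]
    (ρ σ : Matrix n n ℂ) : ℝ :=
  (Matrix.trace (psdSqrt (psdSqrt σ * ρ * psdSqrt σ))).re

/-- The trace norm `‖M‖₁ := Tr((M†M)^{1/2})` of a complex matrix. -/
noncomputable def traceNorm {m n : Type*} [Fintype m] [Fintype n] [DecidableEq n]
    (M : Matrix m n ℂ) : ℝ :=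
  (Matrix.trace (psdSqrt (Mᴴ * M))).re

/-- The Frobenius norm `‖M‖₂ := (Tr(M†M))^{1/2}` of a complex matrix. -/
noncomputable def frobeniusNorm' {m n : Type*} [Fintype m] [Fintype n]
    (M : Matrix m n ℂ) : ℝ :=
  Real.sqrt (Matrix.trace (Mᴴ * M)).re

/-! Write `ρ - σ = X (X - Y)ᴴ + (X - Y) Yᴴ`. Since `ρ - σ` is Hermitian, `U = sign (ρ - σ)` is
unitary and `U (ρ - σ) = |ρ - σ|`, so `‖ρ - σ‖₁ = Re Tr (U (ρ - σ))`. Each of the two resulting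
terms is a Frobenius inner product, bounded by Cauchy–Schwarz and unitary invariance of `‖·‖₂`
by `‖X‖₂ ‖X - Y‖₂` resp. `‖X - Y‖₂ ‖Y‖₂`, and `‖X‖₂ = ‖Y‖₂ = 1`. -/

open Matrix

section Hermitian

open scoped MatrixOrder

variable {n : Type*} [Fintype n] [DecidableEq n]

lemma psdSqrt_eq_sqrt {A : Matrix n n ℂ} (hA : A.PosSemidef) : psdSqrt A = CFC.sqrt A := by
  rw [psdSqrt, dif_pos hA, CFC.sqrt_eq_real_sqrt A hA.nonneg, cfcₙ_eq_cfc, hA.1.cfc_eq]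
  rfl

lemma traceNorm_eq_re_trace_abs (M : Matrix n n ℂ) :
    traceNorm M = (trace (CFC.abs M)).re := by
  rw [traceNorm, psdSqrt_eq_sqrt (posSemidef_conjTranspose_mul_self M)]
  rfl

lemma exists_unitary_re_trace_mul_eq_traceNorm {M : Matrix n n ℂ} (hM : M.IsHermitian) :
    ∃ U ∈ unitaryGroup n ℂ, (trace (U * M)).re = traceNorm M := by
  have hM : IsSelfAdjoint M := hM
  set sign : ℝ → ℝ := fun x => if x < 0 then -1 else 1
  have hsign_mul_self : ∀ x, sign x * sign x = 1 := fun x => by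
    by_cases hx : x < 0 <;> simp [sign, hx]
  have hsign_mul : ∀ x, sign x * x = ‖x‖ := fun x => by
    by_cases hx : x < 0
    · simp [sign, hx, abs_of_neg hx]
    · simp [sign, hx, abs_of_nonneg (not_lt.mp hx)]
  -- `sign` is discontinuous, but only its values on the finite spectrum matter.
  have hcont : ContinuousOn sign (spectrum ℝ M) := M.finite_real_spectrum.continuousOn _
  refine ⟨cfc sign M, mem_unitaryGroup_iff'.mpr ?_, ?_⟩
  · rw [← cfc_star, ← cfc_mul .., ← cfc_one ℝ M hM]
    exact cfc_congr fun x _ => hsign_mul_self x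
  · have hpolar : cfc sign M * M = CFC.abs M := calc
      cfc sign M * M = cfc sign M * cfc (fun x : ℝ => x) M := by rw [cfc_id' ℝ M hM]
      _ = cfc (fun x : ℝ => ‖x‖) M := by
        rw [← cfc_mul ..]
        exact cfc_congr fun x _ => hsign_mul x
      _ = CFC.abs M := (CFC.abs_eq_cfc_norm M hM).symm
    rw [hpolar, traceNorm_eq_re_trace_abs]

end Hermitian

section Frobenius

variable {m n : Type*} [Fintype m] [Fintype n]

lemma trace_mul_conjTranspose_eq_inner (A B : Matrix m n ℂ) :
    trace (A * Bᴴ) =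
      inner ℂ (WithLp.toLp 2 (Function.uncurry B)) (WithLp.toLp 2 (Function.uncurry A)) := by
  simp only [trace, diag_apply, mul_apply, conjTranspose_apply, RCLike.star_def,
    PiLp.inner_apply, RCLike.inner_apply, Fintype.sum_prod_type]
  rfl

lemma frobeniusNorm'_eq_norm_toLp (A : Matrix m n ℂ) :
    frobeniusNorm' A = ‖WithLp.toLp 2 (Function.uncurry A)‖ := by
  rw [frobeniusNorm', trace_mul_comm, trace_mul_conjTranspose_eq_inner,
    norm_eq_sqrt_re_inner (𝕜 := ℂ)]
  rfl

lemma norm_trace_mul_conjTranspose_le (A B : Matrix m n ℂ) :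
    ‖trace (A * Bᴴ)‖ ≤ frobeniusNorm' A * frobeniusNorm' B := by
  rw [trace_mul_conjTranspose_eq_inner, frobeniusNorm'_eq_norm_toLp,
    frobeniusNorm'_eq_norm_toLp, mul_comm]
  exact norm_inner_le_norm _ _

lemma frobeniusNorm'_unitary_mul [DecidableEq m] {U : Matrix m m ℂ} (hU : U ∈ unitaryGroup m ℂ)
    (A : Matrix m n ℂ) : frobeniusNorm' (U * A) = frobeniusNorm' A := by
  rw [frobeniusNorm', frobeniusNorm', conjTranspose_mul, Matrix.mul_assoc,
    ← Matrix.mul_assoc Uᴴ, ← star_eq_conjTranspose, mem_unitaryGroup_iff'.mp hU, Matrix.one_mul]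

lemma frobeniusNorm'_eq_one_of_trace_mul_conjTranspose {A : Matrix m n ℂ}
    (hA : trace (A * Aᴴ) = 1) : frobeniusNorm' A = 1 := by
  rw [frobeniusNorm', trace_mul_comm, hA, Complex.one_re, Real.sqrt_one]

lemma traceNorm_mul_conjTranspose_sub_le [DecidableEq m] (X Y : Matrix m n ℂ) :
    traceNorm (X * Xᴴ - Y * Yᴴ) ≤
      (frobeniusNorm' X + frobeniusNorm' Y) * frobeniusNorm' (X - Y) := by
  obtain ⟨U, hU, hUM⟩ := exists_unitary_re_trace_mul_eq_traceNorm
    ((isHermitian_mul_conjTranspose_self X).sub (isHermitian_mul_conjTranspose_self Y))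
  have hsplit : X * Xᴴ - Y * Yᴴ = X * (X - Y)ᴴ + (X - Y) * Yᴴ := by
    rw [conjTranspose_sub, Matrix.mul_sub, Matrix.sub_mul]
    abel
  rw [← hUM, hsplit, Matrix.mul_add, trace_add, Complex.add_re, ← Matrix.mul_assoc,
    ← Matrix.mul_assoc]
  calc (trace (U * X * (X - Y)ᴴ)).re + (trace (U * (X - Y) * Yᴴ)).re
      ≤ ‖trace (U * X * (X - Y)ᴴ)‖ + ‖trace (U * (X - Y) * Yᴴ)‖ :=
        add_le_add (Complex.re_le_norm _) (Complex.re_le_norm _)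
    _ ≤ frobeniusNorm' (U * X) * frobeniusNorm' (X - Y)
        + frobeniusNorm' (U * (X - Y)) * frobeniusNorm' Y :=
        add_le_add (norm_trace_mul_conjTranspose_le _ _) (norm_trace_mul_conjTranspose_le _ _)
    _ = (frobeniusNorm' X + frobeniusNorm' Y) * frobeniusNorm' (X - Y) := by
      rw [frobeniusNorm'_unitary_mul hU, frobeniusNorm'_unitary_mul hU]
      ring

end Frobenius

/-- **Trace-norm bound of Lemma 1.** If `X, Y` are `d × K` complex matrices such
that `ρ := XX†` and `σ := YY†` both have trace `1`, then
`‖ρ − σ‖₁ ≤ 2·‖X − Y‖₂`. -/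
theorem traceNorm_diff_le_of_purifications {d K : ℕ}
    (X Y : Matrix (Fin d) (Fin K) ℂ)
    (hX : Matrix.trace (X * Xᴴ) = 1) (hY : Matrix.trace (Y * Yᴴ) = 1) :
    traceNorm (X * Xᴴ - Y * Yᴴ) ≤ 2 * frobeniusNorm' (X - Y) := by
  calc traceNorm (X * Xᴴ - Y * Yᴴ)
      ≤ (frobeniusNorm' X + frobeniusNorm' Y) * frobeniusNorm' (X - Y) :=
        traceNorm_mul_conjTranspose_sub_le X Y
    _ = 2 * frobeniusNorm' (X - Y) := by
      rw [frobeniusNorm'_eq_one_of_trace_mul_conjTranspose hX,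
        frobeniusNorm'_eq_one_of_trace_mul_conjTranspose hY]
      norm_num
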